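/- arXiv:2210.05317 — 3 statements merged into one kernel-verified Lean document; each statement's English description precedes it below -/
import Mathlib

section
/- Let a group G act by simplicial automorphisms on a simplicial complex K. Suppose X ⊆ K is a subcomplex such that every locally injective simplicial map X → K is the restriction of the action of a unique element of G (i.e. X is a rigid set with trivial pointwise stabilizer), and let h₁, …, h_k ∈ G be such that for each j the subcomplex X ∪ h_j(X) is also rigid with trivial pointwise stabilizer. Then X ∪ h_j⁻¹(X) is rigid with trivial pointwise stabilizer for each j. -/
/-! Abstract simplicial complexes as sets of finite simplices; a group `G` acts
simplicially on `K`.  Rigid sets with trivial pointwise stabilizer. -/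

/-- The vertex set of a set of simplices. -/
def verts {V : Type*} (X : Set (Finset V)) : Set V := {v | ∃ s ∈ X, v ∈ s}

/-- The (closed) star of a vertex: all vertices sharing a simplex of `X` with `v`. -/
def star {V : Type*} (X : Set (Finset V)) (v : V) : Set V := {w | ∃ s ∈ X, v ∈ s ∧ w ∈ s}

/-- `φ` is simplicial from `X` into `K`. -/
def SimplicialOn {V : Type*} [DecidableEq V] (φ : V → V) (X K : Set (Finset V)) : Prop :=
  ∀ s ∈ X, s.image φ ∈ K

/-- `φ` is locally injective on `X`: injective on the star of each vertex. -/
def LocInj {V : Type*} (φ : V → V) (X : Set (Finset V)) : Prop :=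
  ∀ v : V, Set.InjOn φ (star X v)

/-- The trSet of a subcomplex by a group element. -/
def trSet {V G : Type*} [DecidableEq V] [Group G] [MulAction G V]
    (g : G) (X : Set (Finset V)) : Set (Finset V) :=
  (fun s : Finset V => s.image (fun v => g • v)) '' X

/-- `X` is a rigid subset of `K` with trivial pointwise stabilizer: every locally injective
simplicial map `X → K` is the restriction of a unique element of `G`. -/
def RigidUnique (G : Type*) {V : Type*} [DecidableEq V] [Group G] [MulAction G V]
    (K X : Set (Finset V)) : Prop :=
  ∀ φ : V → V, SimplicialOn φ X K → LocInj φ X →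
    ∃! g : G, ∀ v ∈ verts X, φ v = g • v

/-- if `X` is rigid with trivial pointwise stabilizer and `X ∪ hⱼ(X)` is rigid
with trivial pointwise stabilizer for each generator `hⱼ`, then so is `X ∪ hⱼ⁻¹(X)`. -/
theorem rigid_union_inv_translate {V G : Type*} [DecidableEq V] [Group G] [MulAction G V]
    (K X : Set (Finset V)) (hXK : X ⊆ K)
    (hact : ∀ g : G, ∀ s ∈ K, s.image (fun v => g • v) ∈ K)
    (hX : RigidUnique G K X)
    (k : ℕ) (h : Fin k → G)
    (hj : ∀ j : Fin k, RigidUnique G K (X ∪ trSet (h j) X)) :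
    ∀ j : Fin k, RigidUnique G K (X ∪ trSet (h j)⁻¹ X) := by

  -- trivial pointwise stabilizer of `X`
  have htriv : ∀ g : G, (∀ v ∈ verts X, g • v = v) → g = 1 := by
    intro g hg
    obtain ⟨e, -, hu⟩ := hX id (by intro s hs; simpa using hXK hs)
      (fun v => Function.injective_id.injOn)
    have h1 : g = e := hu g (fun v hv => (hg v hv).symm)
    have h2 : (1 : G) = e := hu 1 (fun v hv => (one_smul G v).symm)
    rw [h1, h2]
  intro j φ hφs hφl
  set a := h j with ha
  set ψ := fun v => φ (a⁻¹ • v) with hψ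
  have key : ∀ s ∈ X ∪ trSet a X, s.image (fun v => a⁻¹ • v) ∈ X ∪ trSet a⁻¹ X := by
    rintro s (hs | ⟨t, ht, rfl⟩)
    · exact Or.inr ⟨s, hs, rfl⟩
    · left
      have : (t.image (fun v => a • v)).image (fun v => a⁻¹ • v) = t := by
        rw [Finset.image_image]
        ext v; simp [Function.comp]
      rw [this]; exact ht
  have hψs : SimplicialOn ψ (X ∪ trSet a X) K := by
    intro s hs
    have := hφs _ (key s hs)
    rw [Finset.image_image] at this
    exact this
  have hψl : LocInj ψ (X ∪ trSet a X) := by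
    intro v x hx y hy hxy
    have hst : ∀ w ∈ star (X ∪ trSet a X) v,
        a⁻¹ • w ∈ star (X ∪ trSet a⁻¹ X) (a⁻¹ • v) := by
      rintro w ⟨s, hs, hvs, hws⟩
      exact ⟨s.image (fun u => a⁻¹ • u), key s hs,
        Finset.mem_image_of_mem _ hvs, Finset.mem_image_of_mem _ hws⟩
    have := hφl (a⁻¹ • v) (hst x hx) (hst y hy) hxy
    exact MulAction.injective a⁻¹ this
  obtain ⟨g, hg, hgu⟩ := hj j ψ hψs hψl
  have hmem : ∀ w ∈ verts (X ∪ trSet a⁻¹ X), a • w ∈ verts (X ∪ trSet a X) := by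
    rintro w ⟨s, hs | ⟨t, ht, rfl⟩, hws⟩
    · exact ⟨s.image (fun v => a • v), Or.inr ⟨s, hs, rfl⟩,
        Finset.mem_image_of_mem _ hws⟩
    · obtain ⟨u, hu, rfl⟩ := Finset.mem_image.1 hws
      refine ⟨t, Or.inl ht, ?_⟩
      simpa using hu
  have hmain : ∀ w ∈ verts (X ∪ trSet a⁻¹ X), φ w = (g * a) • w := by
    intro w hw
    have := hg (a • w) (hmem w hw)
    simp only [hψ, inv_smul_smul] at this
    rw [this, mul_smul]
  refine ⟨g * a, hmain, ?_⟩
  intro g' hg'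
  have hXsub : verts X ⊆ verts (X ∪ trSet a⁻¹ X) := by
    rintro v ⟨s, hs, hvs⟩; exact ⟨s, Or.inl hs, hvs⟩
  have : (g * a)⁻¹ * g' = 1 := by
    apply htriv
    intro v hv
    have h1 := hg' v (hXsub hv)
    have h2 := hmain v (hXsub hv)
    rw [mul_smul, ← h1, h2, inv_smul_smul]
  calc g' = (g * a) * ((g * a)⁻¹ * g') := by group
    _ = g * a := by rw [this, mul_one]
end

section
/- Let a group G act by simplicial automorphisms on a simplicial complex K, let X₁ ⊆ K be a rigid set with trivial pointwise stabilizer, and let h₁, …, h_k generate G. Assume X₁ ∪ h_j(X₁) is rigid with trivial pointwise stabilizer for every j. Define X_{i+1} = X_i ∪ ⋃_{j=1}^{k} (h_j(X_i) ∪ h_j⁻¹(X_i)). Then every X_i is a rigid set with trivial pointwise stabilizer. -/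
section helpers
variable {V G : Type*} [DecidableEq V] [Group G] [MulAction G V]

lemma verts_mono {A B : Set (Finset V)} (hAB : A ⊆ B) : verts A ⊆ verts B := by
  rintro v ⟨s, hs, hv⟩; exact ⟨s, hAB hs, hv⟩

lemma star_mono {A B : Set (Finset V)} (hAB : A ⊆ B) (v : V) : star A v ⊆ star B v := by
  rintro w ⟨s, hs, hv, hw⟩; exact ⟨s, hAB hs, hv, hw⟩

lemma simplicialOn_mono {φ : V → V} {A B K : Set (Finset V)} (hAB : A ⊆ B)
    (hφ : SimplicialOn φ B K) : SimplicialOn φ A K := fun s hs => hφ s (hAB hs)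

lemma locInj_mono {φ : V → V} {A B : Set (Finset V)} (hAB : A ⊆ B)
    (hφ : LocInj φ B) : LocInj φ A := fun v => (hφ v).mono (star_mono hAB v)

lemma mem_verts_trSet (g : G) {A : Set (Finset V)} {v : V} (hv : v ∈ verts A) :
    g • v ∈ verts (trSet g A) := by
  obtain ⟨s, hs, hv⟩ := hv
  exact ⟨s.image (fun v => g • v), ⟨s, hs, rfl⟩, Finset.mem_image_of_mem _ hv⟩

lemma trSet_mono (g : G) {A B : Set (Finset V)} (hAB : A ⊆ B) : trSet g A ⊆ trSet g B :=
  Set.image_mono hAB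

lemma trSet_inv_trSet (g : G) (A : Set (Finset V)) : trSet g⁻¹ (trSet g A) = A := by
  have himg : ∀ u : Finset V, (u.image (fun v => g • v)).image (fun v => g⁻¹ • v) = u := by
    intro u
    rw [Finset.image_image]
    have hcomp : ((fun v => g⁻¹ • v) ∘ fun v => g • v) = (id : V → V) := by
      funext v; simp
    rw [hcomp, Finset.image_id]
  ext s
  constructor
  · rintro ⟨t, ⟨u, hu, rfl⟩, rfl⟩
    show (u.image (fun v => g • v)).image (fun v => g⁻¹ • v) ∈ A
    rwa [himg]
  · intro hs
    refine ⟨s.image (fun v => g • v), ⟨s, hs, rfl⟩, ?_⟩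
    exact himg s

lemma pull_simp (g : G) (φ : V → V) {A B K : Set (Finset V)} (hAB : trSet g A ⊆ B)
    (hφ : SimplicialOn φ B K) : SimplicialOn (fun w => φ (g • w)) A K := by
  intro s hs
  have h1 : s.image (fun v => g • v) ∈ B := hAB ⟨s, hs, rfl⟩
  have h2 := hφ _ h1
  rwa [Finset.image_image] at h2

lemma pull_locInj (g : G) (φ : V → V) {A B : Set (Finset V)} (hAB : trSet g A ⊆ B)
    (hφ : LocInj φ B) : LocInj (fun w => φ (g • w)) A := by
  intro v a ha b hb hab
  have key : ∀ w ∈ star A v, g • w ∈ star B (g • v) := by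
    rintro w ⟨s, hs, hvs, hws⟩
    exact ⟨s.image (fun v => g • v), hAB ⟨s, hs, rfl⟩,
      Finset.mem_image_of_mem _ hvs, Finset.mem_image_of_mem _ hws⟩
  have := hφ (g • v) (key a ha) (key b hb) hab
  exact smul_left_cancel g this

end helpers

/-- iterating the enlargement `X_{i+1} = X_i ∪ ⋃ⱼ (hⱼ(X_i) ∪ hⱼ⁻¹(X_i))`
starting from a rigid set with trivial pointwise stabilizer, where the `hⱼ` generate `G` and
each `X₁ ∪ hⱼ(X₁)` is rigid with trivial pointwise stabilizer, every `X_i` is a rigid set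
with trivial pointwise stabilizer.  (Here `X 0` plays the role of `X₁`.) -/
theorem rigid_exhaustion_terms {V G : Type*} [DecidableEq V] [Group G] [MulAction G V]
    (K : Set (Finset V))
    (hact : ∀ g : G, ∀ s ∈ K, s.image (fun v => g • v) ∈ K)
    (k : ℕ) (h : Fin k → G)
    (hgen : Subgroup.closure (Set.range h) = (⊤ : Subgroup G))
    (X : ℕ → Set (Finset V)) (hX1K : X 0 ⊆ K)
    (hX1 : RigidUnique G K (X 0))
    (hbase : ∀ j : Fin k, RigidUnique G K (X 0 ∪ trSet (h j) (X 0)))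
    (hrec : ∀ i : ℕ, X (i + 1) =
      X i ∪ ⋃ j : Fin k, (trSet (h j) (X i) ∪ trSet (h j)⁻¹ (X i))) :
    ∀ i : ℕ, RigidUnique G K (X i) := by
  have hmono : ∀ i, X i ⊆ X (i + 1) := by
    intro i; rw [hrec i]; exact Set.subset_union_left
  have hX0sub : ∀ i, X 0 ⊆ X i := by
    intro i
    induction i with
    | zero => exact subset_rfl
    | succ n ih => exact ih.trans (hmono n)
  have hagree : ∀ a b : G, (∀ v ∈ verts (X 0), a • v = b • v) → a = b := by
    intro a b hab
    have hs : SimplicialOn (fun v => a • v) (X 0) K := fun s hs => hact a s (hX1K hs)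
    have hl : LocInj (fun v => a • v) (X 0) := fun v x _ y _ hxy => smul_left_cancel a hxy
    obtain ⟨c, _, hu⟩ := hX1 _ hs hl
    have ha := hu a fun v _ => rfl
    have hb := hu b hab
    exact ha.trans hb.symm
  intro i
  induction i with
  | zero => exact hX1
  | succ n ih =>
    intro φ hφ hlφ
    obtain ⟨g, hg, hgu⟩ := ih φ (simplicialOn_mono (hmono n) hφ) (locInj_mono (hmono n) hlφ)
    refine ⟨g, ?_, ?_⟩
    · intro v hv
      obtain ⟨s, hs, hv⟩ := hv
      rw [hrec n] at hs
      rcases hs with hs | hs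
      · exact hg v ⟨s, hs, hv⟩
      · rw [Set.mem_iUnion] at hs
        obtain ⟨j, hs⟩ := hs
        have hsubP : trSet (h j) (X n) ⊆ X (n + 1) := by
          rw [hrec n]; intro t ht
          exact Or.inr (Set.mem_iUnion.2 ⟨j, Or.inl ht⟩)
        have hsubM : trSet (h j)⁻¹ (X n) ⊆ X (n + 1) := by
          rw [hrec n]; intro t ht
          exact Or.inr (Set.mem_iUnion.2 ⟨j, Or.inr ht⟩)
        have hsub0 : X 0 ∪ trSet (h j) (X 0) ⊆ X (n + 1) :=
          Set.union_subset (hX0sub (n + 1)) ((trSet_mono _ (hX0sub n)).trans hsubP)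
        rcases hs with hs | hs
        · -- s is a translate of a simplex of `X n` by `h j`
          obtain ⟨c, hc, -⟩ := ih (fun w => φ (h j • w))
            (pull_simp _ _ hsubP hφ) (pull_locInj _ _ hsubP hlφ)
          obtain ⟨d, hd, -⟩ := hbase j φ (simplicialOn_mono hsub0 hφ)
            (locInj_mono hsub0 hlφ)
          have hdg : d = g := hagree d g fun w hw =>
            (hd w (verts_mono Set.subset_union_left hw)).symm.trans
              (hg w (verts_mono (hX0sub n) hw))
          have hc' : c = g * h j := by
            apply hagree
            intro w hw
            have h1 : φ (h j • w) = c • w := hc w (verts_mono (hX0sub n) hw)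
            have h2 : φ (h j • w) = d • (h j • w) :=
              hd _ (verts_mono Set.subset_union_right (mem_verts_trSet (h j) hw))
            rw [← h1, h2, hdg, mul_smul]
          obtain ⟨t, ht, rfl⟩ := hs
          obtain ⟨w, hw, rfl⟩ := Finset.mem_image.1 hv
          have h1 : φ (h j • w) = c • w := hc w ⟨t, ht, hw⟩
          rw [h1, hc', mul_smul]
        · -- s is a translate of a simplex of `X n` by `(h j)⁻¹`
          obtain ⟨c, hc, -⟩ := ih (fun w => φ ((h j)⁻¹ • w))
            (pull_simp _ _ hsubM hφ) (pull_locInj _ _ hsubM hlφ)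
          have hsubχ : trSet (h j)⁻¹ (X 0 ∪ trSet (h j) (X 0)) ⊆ X (n + 1) := by
            have himg : trSet (h j)⁻¹ (X 0 ∪ trSet (h j) (X 0))
                = trSet (h j)⁻¹ (X 0) ∪ trSet (h j)⁻¹ (trSet (h j) (X 0)) :=
              Set.image_union _ _ _
            rw [himg, trSet_inv_trSet]
            exact Set.union_subset ((trSet_mono _ (hX0sub n)).trans hsubM) (hX0sub (n + 1))
          obtain ⟨e, he, -⟩ := hbase j (fun w => φ ((h j)⁻¹ • w))
            (pull_simp _ _ hsubχ hφ) (pull_locInj _ _ hsubχ hlφ)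
          have hec : e = c := hagree e c fun w hw =>
            (he w (verts_mono Set.subset_union_left hw)).symm.trans
              (hc w (verts_mono (hX0sub n) hw))
          have hcg : c * h j = g := by
            apply hagree
            intro w hw
            have h1 : φ ((h j)⁻¹ • (h j • w)) = e • (h j • w) :=
              he _ (verts_mono Set.subset_union_right (mem_verts_trSet (h j) hw))
            rw [inv_smul_smul] at h1
            rw [mul_smul, ← hec, ← h1, hg w (verts_mono (hX0sub n) hw)]
          obtain ⟨t, ht, rfl⟩ := hs
          obtain ⟨w, hw, rfl⟩ := Finset.mem_image.1 hv
          have h1 : φ ((h j)⁻¹ • w) = c • w := hc w ⟨t, ht, hw⟩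
          have hgc : g = c * h j := hcg.symm
          rw [h1, hgc, mul_smul, smul_inv_smul]
    · intro g'' hg''
      exact hgu g'' fun v hv => hg'' v (verts_mono (hmono n) hv)
end

section
/- If an exhaustion K = ⋃_{i=1}^∞ X_i by subcomplexes X₁ ⊆ X₂ ⊆ ⋯ exists, where each X_i is a rigid set with trivial pointwise stabilizer with respect to a group G acting simplicially on K, then every locally injective simplicial map φ: K → K is induced by a unique element of G; in particular G is isomorphic to its image in the group of simplicial automorphisms of K, and if moreover every simplicial automorphism of K is locally injective, G surjects onto Aut(K). -/
/-- if `K` is exhausted by an increasing sequence of rigid sets with trivial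
pointwise stabilizers, then every locally injective simplicial map `K → K` is induced by a
unique element of `G`; moreover `G` embeds in the simplicial automorphisms of `K` (the
action on vertices of `K` is faithful), and if every simplicial automorphism of `K` is
locally injective then every simplicial automorphism is induced by an element of `G`. -/
theorem rigid_exhaustion_global {V G : Type*} [DecidableEq V] [Group G] [MulAction G V]
    (K : Set (Finset V))
    (hact : ∀ g : G, ∀ s ∈ K, s.image (fun v => g • v) ∈ K)
    (X : ℕ → Set (Finset V)) (hmono : ∀ i : ℕ, X i ⊆ X (i + 1))
    (hXK : ∀ i : ℕ, X i ⊆ K)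
    (hrig : ∀ i : ℕ, RigidUnique G K (X i))
    (hexh : (⋃ i : ℕ, X i) = K) :
    (∀ φ : V → V, SimplicialOn φ K K → LocInj φ K →
        ∃! g : G, ∀ v ∈ verts K, φ v = g • v) ∧
    (∀ g g' : G, (∀ v ∈ verts K, g • v = g' • v) → g = g') ∧
    ((∀ ψ : V → V, SimplicialOn ψ K K → Set.BijOn ψ (verts K) (verts K) → LocInj ψ K) →
      ∀ ψ : V → V, SimplicialOn ψ K K → Set.BijOn ψ (verts K) (verts K) →
        ∃ g : G, ∀ v ∈ verts K, ψ v = g • v) := by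
  have hXsubK : ∀ i : ℕ, verts (X i) ⊆ verts K := fun i v ⟨s, hs, hv⟩ => ⟨s, hXK i hs, hv⟩
  have hmain : ∀ φ : V → V, SimplicialOn φ K K → LocInj φ K →
      ∃! g : G, ∀ v ∈ verts K, φ v = g • v := by
    intro φ hsimp hloc
    have hSi : ∀ i, SimplicialOn φ (X i) K := fun i s hs => hsimp s (hXK i hs)
    have hstar : ∀ i v, star (X i) v ⊆ star K v := by
      rintro i v w ⟨s, hs, h1, h2⟩; exact ⟨s, hXK i hs, h1, h2⟩
    have hLi : ∀ i, LocInj φ (X i) := fun i v => (hloc v).mono (hstar i v)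
    choose g hg hgu using fun i => hrig i φ (hSi i) (hLi i)
    have hconst : ∀ i, g i = g 0 := by
      intro i
      induction i with
      | zero => rfl
      | succ n ih =>
        rw [← ih]
        refine hgu n (g (n+1)) ?_
        rintro v ⟨s, hs, hvs⟩
        exact hg (n+1) v ⟨s, hmono n hs, hvs⟩
    refine ⟨g 0, ?_, ?_⟩
    · intro v hv
      obtain ⟨s, hs, hvs⟩ := hv
      rw [← hexh] at hs
      obtain ⟨i, hi⟩ := Set.mem_iUnion.mp hs
      have := hg i v ⟨s, hi, hvs⟩
      rwa [hconst i] at this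
    · intro g' hg'
      exact hgu 0 g' (fun v hv => hg' v (hXsubK 0 hv))
  refine ⟨hmain, ?_, ?_⟩
  · intro g g' heq
    obtain ⟨h, hh, hu⟩ := hrig 0 (fun v => g • v)
      (fun s hs => hact g s (hXK 0 hs))
      (fun v => (MulAction.injective g).injOn)
    exact (hu g (fun v _ => rfl)).trans
      (hu g' (fun v hv => heq v (hXsubK 0 hv))).symm
  · intro hLI ψ hs hb
    obtain ⟨g, hg, _⟩ := hmain ψ hs (hLI ψ hs hb)
    exact ⟨g, hg⟩
end
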